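/- arXiv:1104.3047 — 3 statements merged into one kernel-verified Lean document; each statement's English description precedes it below -/
import Mathlib

section
/- For every nonnegative integer m, the sum over k from 0 to m of C(2k,k)^2 * C(4k,2k) * C(k, m-k) * (-64)^(m-k) equals the sum over k from 0 to m of C(2k,k) * C(4k,2k) * C(2(m-k), m-k) * C(4(m-k), 2(m-k)). -/
/-!
With `a k = C(2k,k) C(4k,2k)` and `b k = C(2k,k) a k`, the identity says
`(∑ a k x^k)^2 = ∑ b k (x - 64 x^2)^k` coefficientwise, a Clausen-type formula. Both sides are
shown to satisfy the same three-term recurrence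
`(n+2)^3 u (n+2) = 8 (2n+3)(8n^2+24n+19) u (n+1) - 1024 (n+1)(2n+1)(2n+3) u n`,
the left side only from `n = 2` on, so four initial values suffice.

The recurrences come from weighted moments `∑ k^p (summand)`: the first-order recurrences of
`a`, `b` and of the coefficients of `(x - 64 x^2)^k` shift the weights by polynomials in `k`, and
the symmetry `k ↔ m - k` of the convolution gives two more relations. Eliminating all moments
but the zeroth is linear algebra over `ℚ[n]`; its solutions appear as `linear_combination`
certificates.
-/

open Finset Nat

def seriesA (k : ℕ) : ℤ := centralBinom k * centralBinom (2 * k)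

def seriesB (k : ℕ) : ℤ := centralBinom k * seriesA k

-- The coefficient of `x^m` in `(x - 64 x^2)^k`. Without the guard, the truncated `m - k = 0`
-- would give `1` for `m < k`.
def substCoeff (k m : ℕ) : ℤ :=
  if k ≤ m then (k.choose (m - k) : ℤ) * (-64) ^ (m - k) else 0

def lhsMoment (p m : ℕ) : ℤ :=
  ∑ k ∈ range (m + 1), (k : ℤ) ^ p * seriesB k * substCoeff k m

def convMoment (p m : ℕ) : ℤ :=
  ∑ k ∈ range (m + 1), (k : ℤ) ^ p * seriesA k * seriesA (m - k)

lemma succ_mul_centralBinom_succ_int (k : ℕ) :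
    ((k : ℤ) + 1) * centralBinom (k + 1) = 2 * (2 * k + 1) * centralBinom k := by
  exact_mod_cast succ_mul_centralBinom_succ k

lemma centralBinom_two_mul_add_two (k : ℕ) :
    (2 * (k : ℤ) + 1) * (2 * k + 2) * centralBinom (2 * k + 2)
      = 4 * (4 * k + 1) * (4 * k + 3) * centralBinom (2 * k) := by
  have h₁ := succ_mul_centralBinom_succ_int (2 * k + 1)
  have h₂ := succ_mul_centralBinom_succ_int (2 * k)
  push_cast at h₁ h₂
  linear_combination (2 * (k : ℤ) + 1) * h₁ + 2 * (4 * (k : ℤ) + 3) * h₂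

lemma seriesA_succ (k : ℕ) :
    ((k : ℤ) + 1) ^ 2 * seriesA (k + 1) = 4 * (4 * k + 1) * (4 * k + 3) * seriesA k := by
  have hk : (2 * (2 * (k : ℤ) + 1)) ≠ 0 := by positivity
  refine mul_left_cancel₀ hk ?_
  rw [seriesA, seriesA, show 2 * (k + 1) = 2 * k + 2 by ring]
  linear_combination ((2 * (k : ℤ) + 1) * (2 * k + 2) * centralBinom (2 * k + 2))
      * succ_mul_centralBinom_succ_int k
    + (2 * (2 * (k : ℤ) + 1) * centralBinom k) * centralBinom_two_mul_add_two k

lemma seriesB_succ (k : ℕ) :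
    ((k : ℤ) + 1) ^ 3 * seriesB (k + 1)
      = 8 * (2 * k + 1) * (4 * k + 1) * (4 * k + 3) * seriesB k := by
  rw [seriesB, seriesB]
  linear_combination ((k : ℤ) + 1) ^ 2 * seriesA (k + 1) * succ_mul_centralBinom_succ_int k
    + 2 * (2 * (k : ℤ) + 1) * centralBinom k * seriesA_succ k

lemma substCoeff_of_lt {k m : ℕ} (h : m < k) : substCoeff k m = 0 := by
  simp [substCoeff, Nat.not_le.mpr h]


lemma substCoeff_succ_succ (k m : ℕ) :
    (2 * (k : ℤ) + 1 - m) * substCoeff (k + 1) (m + 1) = ((k : ℤ) + 1) * substCoeff k m := by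
  rcases le_or_gt k m with hk | hk
  · obtain ⟨j, rfl⟩ := Nat.exists_eq_add_of_le hk
    have hc : ((k : ℤ) + 1 - j) * (k + 1).choose j = ((k : ℤ) + 1) * k.choose j := by
      rcases le_or_gt j (k + 1) with hj | hj
      · have h := choose_mul_succ_eq k j
        zify [hj] at h
        linarith
      · rw [choose_eq_zero_of_lt hj, choose_eq_zero_of_lt (by omega)]
        simp
    simp only [substCoeff, if_pos hk, if_pos (by omega : k + 1 ≤ k + j + 1),
      show k + j + 1 - (k + 1) = j by omega, Nat.add_sub_cancel_left]
    push_cast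
    linear_combination (-64 : ℤ) ^ j * hc
  · rw [substCoeff_of_lt hk, substCoeff_of_lt (by omega)]
    ring

lemma substCoeff_succ_add_two (k m : ℕ) :
    ((k : ℤ) - m - 1) * substCoeff (k + 1) (m + 2) = 64 * ((k : ℤ) + 1) * substCoeff k m := by
  rcases le_or_gt k m with hk | hk
  · obtain ⟨j, rfl⟩ := Nat.exists_eq_add_of_le hk
    have hc : ((k : ℤ) + 1) * k.choose j = (k + 1).choose (j + 1) * ((j : ℤ) + 1) := by
      exact_mod_cast add_one_mul_choose_eq k j
    simp only [substCoeff, if_pos hk, if_pos (by omega : k + 1 ≤ k + j + 2),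
      show k + j + 2 - (k + 1) = j + 1 by omega, Nat.add_sub_cancel_left]
    push_cast
    linear_combination (-64 : ℤ) * (-64 : ℤ) ^ j * hc
  · rcases (by omega : k = m + 1 ∨ m + 1 < k) with rfl | hk'
    · rw [substCoeff_of_lt hk]
      push_cast
      ring
    · rw [substCoeff_of_lt hk, substCoeff_of_lt (by omega)]
      ring

lemma sum_add_one_pow_mul (s : Finset ℕ) (q : ℕ) (g : ℕ → ℤ) :
    ∑ j ∈ s, ((j : ℤ) + 1) ^ q * g j
      = ∑ i ∈ range (q + 1), (q.choose i : ℤ) * ∑ j ∈ s, (j : ℤ) ^ i * g j := by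
  simp_rw [add_pow, one_pow, mul_one, sum_mul, mul_sum]
  rw [sum_comm]
  exact sum_congr rfl fun _ _ => sum_congr rfl fun _ _ => by ring

lemma sum_seriesB_substCoeff_shift_succ (f : ℕ → ℤ) (m : ℕ) :
    ∑ k ∈ range (m + 2),
        f k * (k : ℤ) ^ 2 * (2 * k - (m + 1)) * seriesB k * substCoeff k (m + 1)
      = ∑ j ∈ range (m + 1),
          f (j + 1)
            * (8 * (2 * j + 1) * (4 * j + 1) * (4 * j + 3) * seriesB j * substCoeff j m) := by
  rw [sum_range_succ']
  simp only [CharP.cast_eq_zero, ne_eq, OfNat.ofNat_ne_zero, not_false_eq_true, zero_pow,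
    mul_zero, zero_mul, add_zero]
  refine sum_congr rfl fun j _ => ?_
  push_cast
  linear_combination f (j + 1) * ((j : ℤ) + 1) ^ 2 * seriesB (j + 1) * substCoeff_succ_succ j m
    + f (j + 1) * substCoeff j m * seriesB_succ j

lemma sum_seriesB_substCoeff_shift_add_two (f : ℕ → ℤ) (m : ℕ) :
    ∑ k ∈ range (m + 3), f k * (k : ℤ) ^ 2 * (k - (m + 2)) * seriesB k * substCoeff k (m + 2)
      = 64 * ∑ j ∈ range (m + 1),
          f (j + 1)
            * (8 * (2 * j + 1) * (4 * j + 1) * (4 * j + 3) * seriesB j * substCoeff j m) := by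
  rw [sum_range_succ', sum_range_succ, mul_sum]
  simp only [CharP.cast_eq_zero, ne_eq, OfNat.ofNat_ne_zero, not_false_eq_true, zero_pow,
    mul_zero, zero_mul, add_zero, show ((m + 1 + 1 : ℕ) : ℤ) - (m + 2) = 0 by push_cast; ring]
  refine sum_congr rfl fun j _ => ?_
  push_cast
  linear_combination
    f (j + 1) * ((j : ℤ) + 1) ^ 2 * seriesB (j + 1) * substCoeff_succ_add_two j m
    + 64 * f (j + 1) * substCoeff j m * seriesB_succ j

lemma sum_pow_mul_ratio_seriesB (i m : ℕ) :
    ∑ j ∈ range (m + 1),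
        (j : ℤ) ^ i * (8 * (2 * j + 1) * (4 * j + 1) * (4 * j + 3) * seriesB j * substCoeff j m)
      = 256 * lhsMoment (i + 3) m + 384 * lhsMoment (i + 2) m + 176 * lhsMoment (i + 1) m
        + 24 * lhsMoment i m := by
  simp only [lhsMoment, mul_sum, ← sum_add_distrib]
  exact sum_congr rfl fun _ _ => by ring

lemma lhsMoment_shift_succ (q m : ℕ) :
    2 * lhsMoment (q + 3) (m + 1) - ((m : ℤ) + 1) * lhsMoment (q + 2) (m + 1)
      = ∑ i ∈ range (q + 1), (q.choose i : ℤ) * (256 * lhsMoment (i + 3) m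
          + 384 * lhsMoment (i + 2) m + 176 * lhsMoment (i + 1) m + 24 * lhsMoment i m) := by
  calc 2 * lhsMoment (q + 3) (m + 1) - ((m : ℤ) + 1) * lhsMoment (q + 2) (m + 1)
      = ∑ k ∈ range (m + 2), (k : ℤ) ^ q * (k : ℤ) ^ 2 * (2 * k - (m + 1)) * seriesB k
          * substCoeff k (m + 1) := by
        simp only [lhsMoment, mul_sum, ← sum_sub_distrib]
        exact sum_congr rfl fun _ _ => by ring
    _ = ∑ j ∈ range (m + 1), ((j : ℤ) + 1) ^ q
          * (8 * (2 * j + 1) * (4 * j + 1) * (4 * j + 3) * seriesB j * substCoeff j m) := by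
        rw [sum_seriesB_substCoeff_shift_succ (fun k => (k : ℤ) ^ q)]
        push_cast
        rfl
    _ = _ := by simp only [sum_add_one_pow_mul, sum_pow_mul_ratio_seriesB]

lemma lhsMoment_shift_add_two (q m : ℕ) :
    lhsMoment (q + 3) (m + 2) - ((m : ℤ) + 2) * lhsMoment (q + 2) (m + 2)
      = 64 * ∑ i ∈ range (q + 1), (q.choose i : ℤ) * (256 * lhsMoment (i + 3) m
          + 384 * lhsMoment (i + 2) m + 176 * lhsMoment (i + 1) m + 24 * lhsMoment i m) := by
  calc lhsMoment (q + 3) (m + 2) - ((m : ℤ) + 2) * lhsMoment (q + 2) (m + 2)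
      = ∑ k ∈ range (m + 3), (k : ℤ) ^ q * (k : ℤ) ^ 2 * (k - (m + 2)) * seriesB k
          * substCoeff k (m + 2) := by
        simp only [lhsMoment, mul_sum, ← sum_sub_distrib]
        exact sum_congr rfl fun _ _ => by ring
    _ = 64 * ∑ j ∈ range (m + 1), ((j : ℤ) + 1) ^ q
          * (8 * (2 * j + 1) * (4 * j + 1) * (4 * j + 3) * seriesB j * substCoeff j m) := by
        rw [sum_seriesB_substCoeff_shift_add_two (fun k => (k : ℤ) ^ q)]
        push_cast
        rfl
    _ = _ := by simp only [sum_add_one_pow_mul, sum_pow_mul_ratio_seriesB]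

lemma sum_seriesA_conv_reflect (f : ℤ → ℤ) (m : ℕ) :
    ∑ k ∈ range (m + 1), f k * seriesA k * seriesA (m - k)
      = ∑ k ∈ range (m + 1), f (m - k) * seriesA k * seriesA (m - k) := by
  rw [← sum_range_reflect]
  refine sum_congr rfl fun k hk => ?_
  have hk : k ≤ m := Nat.lt_succ_iff.mp (mem_range.mp hk)
  rw [show m + 1 - 1 - k = m - k by omega, Nat.sub_sub_self hk, Nat.cast_sub hk, mul_right_comm]

lemma two_mul_convMoment_one (m : ℕ) : 2 * convMoment 1 m = m * convMoment 0 m := by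
  have h := sum_seriesA_conv_reflect (fun x => x) m
  rw [two_mul]
  nth_rewrite 2 [convMoment]
  simp only [pow_one]
  rw [h]
  simp only [convMoment, mul_sum, ← sum_add_distrib]
  exact sum_congr rfl fun _ _ => by ring

lemma two_mul_convMoment_three (m : ℕ) :
    2 * convMoment 3 m
      = (m : ℤ) ^ 3 * convMoment 0 m - 3 * (m : ℤ) ^ 2 * convMoment 1 m
        + 3 * (m : ℤ) * convMoment 2 m := by
  have h := sum_seriesA_conv_reflect (fun x => x ^ 3) m
  rw [two_mul]
  nth_rewrite 2 [convMoment]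
  rw [h]
  simp only [convMoment, mul_sum, ← sum_add_distrib, ← sum_sub_distrib]
  exact sum_congr rfl fun _ _ => by ring

lemma sum_pow_mul_ratio_seriesA (i m : ℕ) :
    ∑ j ∈ range (m + 1),
        (j : ℤ) ^ i * (4 * (4 * j + 1) * (4 * j + 3) * seriesA j * seriesA (m - j))
      = 64 * convMoment (i + 2) m + 64 * convMoment (i + 1) m + 12 * convMoment i m := by
  simp only [convMoment, mul_sum, ← sum_add_distrib]
  exact sum_congr rfl fun _ _ => by ring

lemma convMoment_succ (q m : ℕ) :
    convMoment (q + 2) (m + 1)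
      = ∑ i ∈ range (q + 1), (q.choose i : ℤ)
          * (64 * convMoment (i + 2) m + 64 * convMoment (i + 1) m + 12 * convMoment i m) := by
  calc convMoment (q + 2) (m + 1)
      = ∑ j ∈ range (m + 1), ((j : ℤ) + 1) ^ q
          * (4 * (4 * j + 1) * (4 * j + 3) * seriesA j * seriesA (m - j)) := by
        rw [convMoment, sum_range_succ']
        simp only [CharP.cast_eq_zero, ne_eq, OfNat.ofNat_ne_zero, not_false_eq_true, zero_pow,
          add_eq_zero, and_false, zero_mul, add_zero]
        refine sum_congr rfl fun j _ => ?_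
        rw [Nat.add_sub_add_right]
        push_cast
        linear_combination ((j : ℤ) + 1) ^ q * seriesA (m - j) * seriesA_succ j
    _ = _ := by simp only [sum_add_one_pow_mul, sum_pow_mul_ratio_seriesA]

lemma convMoment_recurrence (n : ℕ) :
    ((n : ℤ) + 2) ^ 3 * convMoment 0 (n + 2)
      = 8 * (2 * (n : ℤ) + 3) * (8 * (n : ℤ) ^ 2 + 24 * n + 19) * convMoment 0 (n + 1)
        - 1024 * ((n : ℤ) + 1) * (2 * n + 1) * (2 * n + 3) * convMoment 0 n := by
  have s₀ := two_mul_convMoment_one n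
  have s₁ := two_mul_convMoment_one (n + 1)
  have s₂ := two_mul_convMoment_one (n + 2)
  have t₀ := two_mul_convMoment_three n
  have t₁ := two_mul_convMoment_three (n + 1)
  have t₂ := two_mul_convMoment_three (n + 2)
  have e₀ := convMoment_succ 0 n
  have e₁ := convMoment_succ 0 (n + 1)
  have f₀ := convMoment_succ 1 n
  have f₁ := convMoment_succ 1 (n + 1)
  simp only [sum_range_succ, sum_range_zero, choose_zero_right, choose_self, cast_one, one_mul,
    zero_add, Nat.reduceAdd] at e₀ e₁ f₀ f₁
  push_cast at s₁ s₂ t₁ t₂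
  linear_combination
    (-6656 - 12288 * (n : ℤ)) * s₀ + 4096 * (2 * t₀ - 3 * (n : ℤ) ^ 2 * s₀)
    + (232 + 192 * (n : ℤ)) * s₁ - 128 * (2 * t₁ - 3 * ((n : ℤ) + 1) ^ 2 * s₁)
    + (2 * t₂ - 3 * ((n : ℤ) + 2) ^ 2 * s₂) + (-512 - 384 * (n : ℤ)) * e₀ + 256 * f₀
    + (12 + 6 * (n : ℤ)) * e₁ - 4 * f₁

lemma lhsMoment_recurrence {n : ℕ} (hn : 2 ≤ n) :
    ((n : ℤ) + 2) ^ 3 * lhsMoment 0 (n + 2)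
      = 8 * (2 * (n : ℤ) + 3) * (8 * (n : ℤ) ^ 2 + 24 * n + 19) * lhsMoment 0 (n + 1)
        - 1024 * ((n : ℤ) + 1) * (2 * n + 1) * (2 * n + 3) * lhsMoment 0 n := by
  obtain ⟨n, rfl⟩ : ∃ k, n = k + 2 := ⟨n - 2, by omega⟩
  have a₁ := lhsMoment_shift_succ 0 (n + 1)
  have a₂ := lhsMoment_shift_succ 0 (n + 2)
  have a₃ := lhsMoment_shift_succ 0 (n + 3)
  have a₄ := lhsMoment_shift_succ 0 (n + 4)
  have b₁ := lhsMoment_shift_succ 1 (n + 1)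
  have b₂ := lhsMoment_shift_succ 1 (n + 2)
  have b₃ := lhsMoment_shift_succ 1 (n + 3)
  have b₄ := lhsMoment_shift_succ 1 (n + 4)
  have c₁ := lhsMoment_shift_succ 2 (n + 1)
  have c₂ := lhsMoment_shift_succ 2 (n + 2)
  have c₃ := lhsMoment_shift_succ 2 (n + 3)
  have c₄ := lhsMoment_shift_succ 2 (n + 4)
  have a₁' := lhsMoment_shift_add_two 0 (n + 1)
  have a₂' := lhsMoment_shift_add_two 0 (n + 2)
  have a₃' := lhsMoment_shift_add_two 0 (n + 3)
  have b₁' := lhsMoment_shift_add_two 1 (n + 1)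
  have b₂' := lhsMoment_shift_add_two 1 (n + 2)
  have b₃' := lhsMoment_shift_add_two 1 (n + 3)
  have c₁' := lhsMoment_shift_add_two 2 (n + 1)
  have c₂' := lhsMoment_shift_add_two 2 (n + 2)
  have c₃' := lhsMoment_shift_add_two 2 (n + 3)
  simp only [sum_range_succ, sum_range_zero, choose_zero_right, choose_one_right, choose_self,
    add_assoc, Nat.reduceAdd, zero_add, cast_one, cast_ofNat, one_mul] at *
  push_cast at *
  -- the certificate below has denominator 72
  refine mul_left_cancel₀ (show (72 : ℤ) ≠ 0 by norm_num) ?_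
  linear_combination
      (-121602048 - 73662464 * n - 11141120 * n ^ 2 : ℤ) * a₁
      + (2650112 + 1358848 * n + 174080 * n ^ 2 : ℤ) * a₂
      + (73992 + 61744 * n + 17216 * n ^ 2 + 1600 * n ^ 3 : ℤ) * a₃
      + (-1940 - 1373 * n - 322 * n ^ 2 - 25 * n ^ 3 : ℤ) * a₄
      + (-353894400 - 210763776 * n - 31457280 * n ^ 2 : ℤ) * b₁
      + (7569408 + 3858432 * n + 491520 * n ^ 2 : ℤ) * b₂
      + (-82608 - 64736 * n - 16704 * n ^ 2 - 1408 * n ^ 3 : ℤ) * b₃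
      + (2088 + 1402 * n + 308 * n ^ 2 + 22 * n ^ 3 : ℤ) * b₄
      + (-262668288 - 155189248 * n - 23068672 * n ^ 2 : ℤ) * c₁
      + (5570560 + 2834432 * n + 360448 * n ^ 2 : ℤ) * c₂
      + (16032 + 9472 * n + 1408 * n ^ 2 : ℤ) * c₃
      + (-340 - 173 * n - 22 * n ^ 2 : ℤ) * c₄
      + (1900032 + 1150976 * n + 174080 * n ^ 2 : ℤ) * a₁'
      + (-115472 - 82976 * n - 19936 * n ^ 2 - 1600 * n ^ 3 : ℤ) * a₂'
      + (1940 + 1373 * n + 322 * n ^ 2 + 25 * n ^ 3 : ℤ) * a₃'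
      + (5529600 + 3293184 * n + 491520 * n ^ 2 : ℤ) * b₁'
      + (-17184 + 15264 * n + 10624 * n ^ 2 + 1408 * n ^ 3 : ℤ) * b₂'
      + (-2476 - 1599 * n - 333 * n ^ 2 - 22 * n ^ 3 : ℤ) * b₃'
      + (4104192 + 2424832 * n + 360448 * n ^ 2 : ℤ) * c₁'
      + (-119104 - 63232 * n - 8448 * n ^ 2 : ℤ) * c₂'
      + (680 + 346 * n + 44 * n ^ 2 : ℤ) * c₃'

lemma lhsMoment_zero_eq_convMoment_zero (m : ℕ) : lhsMoment 0 m = convMoment 0 m := by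
  induction m using Nat.strong_induction_on with
  | _ m ih =>
    match m, ih with
    | 0, _ | 1, _ | 2, _ | 3, _ => decide
    | n + 4, ih =>
      have hl := lhsMoment_recurrence (show 2 ≤ n + 2 by omega)
      have hr := convMoment_recurrence (n + 2)
      rw [ih (n + 3) (by omega), ih (n + 2) (by omega), ← hr] at hl
      push_cast at hl
      exact mul_left_cancel₀ (by positivity) hl

theorem stmt_0 (m : ℕ) :
    (∑ k ∈ Finset.range (m + 1),
      ((Nat.choose (2 * k) k : ℤ))^2 * (Nat.choose (4 * k) (2 * k)) *
        (Nat.choose k (m - k)) * (-64 : ℤ)^(m - k))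
    = ∑ k ∈ Finset.range (m + 1),
      ((Nat.choose (2 * k) k : ℤ)) * (Nat.choose (4 * k) (2 * k)) *
        (Nat.choose (2 * (m - k)) (m - k)) * (Nat.choose (4 * (m - k)) (2 * (m - k))) := by
  have two_mul_two_mul (k : ℕ) : 2 * (2 * k) = 4 * k := by ring
  have hl : lhsMoment 0 m = ∑ k ∈ range (m + 1), ((choose (2 * k) k : ℤ)) ^ 2
      * (choose (4 * k) (2 * k)) * (choose k (m - k)) * (-64 : ℤ) ^ (m - k) := by
    refine sum_congr rfl fun k hk => ?_
    rw [substCoeff, if_pos (Nat.lt_succ_iff.mp (mem_range.mp hk))]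
    simp only [seriesB, seriesA, centralBinom_eq_two_mul_choose, two_mul_two_mul]
    ring
  have hr : convMoment 0 m = ∑ k ∈ range (m + 1), ((choose (2 * k) k : ℤ))
      * (choose (4 * k) (2 * k)) * (choose (2 * (m - k)) (m - k))
      * (choose (4 * (m - k)) (2 * (m - k))) := by
    refine sum_congr rfl fun k _ => ?_
    simp only [seriesA, centralBinom_eq_two_mul_choose, two_mul_two_mul]
    ring
  rw [← hl, ← hr, lhsMoment_zero_eq_convMoment_zero]
end

section
/- Let p be an odd prime and let k be an integer with 3p/4 <= k <= p-1. Then C(2k,k) * C(4k,2k) is congruent to 0 modulo p^2. -/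
/-!
Since `k < p ≤ 2k`, the prime `p` divides `C(2k, k)`. Since moreover `3p ≤ 4k < 4p`, the last
base-`p` digit of `4k` is `4k - 3p`, smaller than the last digit `2k - p` of `2k`, so by Lucas's
theorem `p` also divides `C(4k, 2k)`.
-/

theorem Nat.Prime.dvd_choose_of_mod_lt {p n k : ℕ} (hp : p.Prime) (h : n % p < k % p) :
    p ∣ n.choose k := by
  have : Fact p.Prime := ⟨hp⟩
  have hlucas := Choose.choose_modEq_choose_mod_mul_choose_div_nat (n := n) (k := k) (p := p)
  rwa [Nat.choose_eq_zero_of_lt h, zero_mul, Nat.modEq_zero_iff_dvd] at hlucas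

theorem stmt_2_general (p k : ℕ) (hp : p.Prime)
    (h1 : 3 * p ≤ 4 * k) (h2 : k ≤ p - 1) :
    p^2 ∣ Nat.choose (2 * k) k * Nat.choose (4 * k) (2 * k) := by
  have hkp : k < p := by have := hp.pos; omega
  have hdvd_central : p ∣ (2 * k).choose k := hp.dvd_choose hkp (by omega) (by omega)
  have hmod_two : 2 * k % p = 2 * k - p * 1 := by
    rw [← Nat.sub_mul_mod (by omega : p * 1 ≤ 2 * k), Nat.mod_eq_of_lt (by omega)]
  have hmod_four : 4 * k % p = 4 * k - p * 3 := by
    rw [← Nat.sub_mul_mod (by omega : p * 3 ≤ 4 * k), Nat.mod_eq_of_lt (by omega)]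
  have hdvd_lucas : p ∣ (4 * k).choose (2 * k) :=
    hp.dvd_choose_of_mod_lt (by omega)
  simpa only [sq] using mul_dvd_mul hdvd_central hdvd_lucas

theorem stmt_2 (p k : ℕ) (hp : p.Prime) (hodd : Odd p)
    (h1 : 3 * p ≤ 4 * k) (h2 : k ≤ p - 1) :
    p^2 ∣ Nat.choose (2 * k) k * Nat.choose (4 * k) (2 * k) :=
  stmt_2_general p k hp h1 h2
end

section
/- Let p be an odd prime and let k, r be integers with 0 <= k <= p-1 and p-k <= r <= p-1. Then C(2k,k) * C(4k,2k) * C(2r,r) * C(4r,2r) is congruent to 0 modulo p^2. -/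
/-!
By Lucas' theorem, `p ∣ C(n, k)` as soon as the last base-`p` digit of `k` exceeds that of `n`.
For `m < p` this gives `p ∣ C(2m, m)` when `p ≤ 2m`, and `p ∣ C(4m, 2m)` when `2m < p ≤ 4m` or
`3p < 4m`. Assuming `k ≤ r`, the condition `k + r ≥ p` forces `p ≤ 2r`; then either `p ≤ 4k`, and
each of the two halves of the product contributes a factor `p`, or `4k < p`, and `4r > 3p` makes
both binomial coefficients of `r` divisible by `p`.
-/

namespace Nat

theorem Prime.dvd_choose_of_mod_lt_s3 {p n k : ℕ} (hp : p.Prime) (h : n % p < k % p) :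
    p ∣ n.choose k := by
  have := Fact.mk hp
  have lucas := Choose.choose_modEq_choose_mod_mul_choose_div_nat (n := n) (k := k) (p := p)
  rw [choose_eq_zero_of_lt h, zero_mul] at lucas
  exact modEq_zero_iff_dvd.mp lucas

def centralBinomProd (m : ℕ) : ℕ := (2 * m).choose m * (4 * m).choose (2 * m)

variable {p m : ℕ}

theorem Prime.dvd_centralBinomProd (hp : p.Prime) (hm : m < p) (h : p ≤ 4 * m) :
    p ∣ centralBinomProd m := by
  by_cases h2 : p ≤ 2 * m
  · have hmod : (2 * m) % p = 2 * m - p := by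
      rw [mod_eq_sub_mod h2, mod_eq_of_lt (by omega)]
    exact (hp.dvd_choose_of_mod_lt_s3 (by rw [hmod, mod_eq_of_lt hm]; omega)).mul_right _
  · have hmod : (4 * m) % p = 4 * m - p := by
      rw [mod_eq_sub_mod h, mod_eq_of_lt (by omega)]
    exact (hp.dvd_choose_of_mod_lt_s3 (by rw [hmod, mod_eq_of_lt (by omega)]; omega)).mul_left _

theorem Prime.sq_dvd_centralBinomProd (hp : p.Prime) (hm : m < p) (h : 3 * p < 4 * m) :
    p ^ 2 ∣ centralBinomProd m := by
  have h2 : (2 * m) % p = 2 * m - p := by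
    rw [mod_eq_sub_mod (by omega), mod_eq_of_lt (by omega)]
  have h4 : (4 * m) % p = 4 * m - 3 * p := by
    conv_lhs => rw [show 4 * m = 4 * m - 3 * p + p * 3 by omega]
    rw [add_mul_mod_self_left, mod_eq_of_lt (by omega)]
  rw [sq]
  exact mul_dvd_mul (hp.dvd_choose_of_mod_lt_s3 (by rw [h2, mod_eq_of_lt hm]; omega))
    (hp.dvd_choose_of_mod_lt_s3 (by rw [h2, h4]; omega))

end Nat

theorem stmt_3_general (p k r : ℕ) (hp : p.Prime)
    (hk : k ≤ p - 1) (hr1 : p - k ≤ r) (hr2 : r ≤ p - 1) :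
    p^2 ∣ Nat.choose (2 * k) k * Nat.choose (4 * k) (2 * k) *
      (Nat.choose (2 * r) r * Nat.choose (4 * r) (2 * r)) := by
  change p ^ 2 ∣ Nat.centralBinomProd k * Nat.centralBinomProd r
  have hp1 := hp.one_lt
  wlog hkr : k ≤ r generalizing k r
  · rw [mul_comm]
    exact this r k hr2 (by omega) hk (by omega)
  by_cases hk4 : p ≤ 4 * k
  · rw [sq]
    exact mul_dvd_mul (hp.dvd_centralBinomProd (by omega) hk4)
      (hp.dvd_centralBinomProd (by omega) (by omega))
  · exact (hp.sq_dvd_centralBinomProd (by omega) (by omega)).mul_left _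

theorem stmt_3 (p k r : ℕ) (hp : p.Prime) (hodd : Odd p)
    (hk : k ≤ p - 1) (hr1 : p - k ≤ r) (hr2 : r ≤ p - 1) :
    p^2 ∣ Nat.choose (2 * k) k * Nat.choose (4 * k) (2 * k) *
      (Nat.choose (2 * r) r * Nat.choose (4 * r) (2 * r)) :=
  stmt_3_general p k r hp hk hr1 hr2
end
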